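/- For a Hull–White process, the correlation function t ↦ corr(q_i(t), q_j(t)) = 2ρ(√(κ_iκ_j)/(κ_i+κ_j))(1 − e^{−(κ_i+κ_j)t})/√((1−e^{−2κ_i t})(1−e^{−2κ_j t})) is bounded above by ρ, with equality if and only if κ_i = κ_j (for t > 0, ρ > 0). -/

import Mathlib

/-! With `x = κᵢ t`, `y = κⱼ t`, `m = (x + y) / 2` and `d = (x - y) / 2`, the identities
`1 - e^{-2u} = 2 e^{-u} sinh u` and `sinh x sinh y = sinh² m - sinh² d` show that `t²` times the
gap between the squared denominator and the squared numerator of `corr / ρ` is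
`16 e^{-2m} (d² sinh² m - m² sinh² d)`. As `sinh u / u` is strictly increasing on `(0, ∞)` and
`|d| < m`, this gap is positive unless `d = 0`, i.e. unless `κᵢ = κⱼ`. -/

open Real Set

theorem Real.sinh_lt_mul_cosh {u : ℝ} (hu : 0 < u) : sinh u < u * cosh u := by
  have hmono : StrictMonoOn (fun v => v * cosh v - sinh v) (Ici 0) := by
    refine strictMonoOn_of_deriv_pos (convex_Ici 0) (by fun_prop) fun v hv => ?_
    rw [interior_Ici, mem_Ioi] at hv
    have hderiv : HasDerivAt (fun v => v * cosh v - sinh v) (1 * cosh v + v * sinh v - cosh v) v :=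
      ((hasDerivAt_id' v).mul (hasDerivAt_cosh v)).sub (hasDerivAt_sinh v)
    rw [hderiv.deriv]
    nlinarith [mul_pos hv (sinh_pos_iff.2 hv)]
  simpa using hmono self_mem_Ici hu.le hu

theorem Real.strictMonoOn_sinh_div_self : StrictMonoOn (fun u => sinh u / u) (Ioi 0) := by
  refine strictMonoOn_of_deriv_pos (convex_Ioi 0)
    (continuous_sinh.continuousOn.div continuousOn_id fun v hv => (mem_Ioi.1 hv).ne') fun v hv => ?_
  rw [interior_Ioi, mem_Ioi] at hv
  have hderiv : HasDerivAt (fun u => sinh u / u) _ v :=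
    (hasDerivAt_sinh v).div (hasDerivAt_id' v) hv.ne'
  rw [hderiv.deriv]
  have := sinh_lt_mul_cosh hv
  apply div_pos _ (by positivity)
  linarith

theorem Real.sq_mul_sinh_sq_lt {d m : ℝ} (hd : d ≠ 0) (hdm : |d| < m) :
    m ^ 2 * sinh d ^ 2 < d ^ 2 * sinh m ^ 2 := by
  have hd' : 0 < |d| := abs_pos.2 hd
  have hm : 0 < m := hd'.trans hdm
  have h := strictMonoOn_sinh_div_self hd' hm hdm
  rw [div_lt_div_iff₀ hd' hm] at h
  have h0 : 0 ≤ sinh |d| * m := mul_nonneg (sinh_nonneg_iff.2 (abs_nonneg d)) hm.le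
  have hsq := pow_lt_pow_left₀ h h0 two_ne_zero
  rw [← abs_sinh, mul_pow, mul_pow, sq_abs, sq_abs] at hsq
  linarith

theorem add_sq_mul_one_sub_exp_sub_four_mul_eq (x y : ℝ) :
    (x + y) ^ 2 * ((1 - exp (-2 * x)) * (1 - exp (-2 * y))) - 4 * x * y * (1 - exp (-(x + y))) ^ 2
      = 16 * exp (-(x + y)) * (((x - y) / 2) ^ 2 * sinh ((x + y) / 2) ^ 2
          - ((x + y) / 2) ^ 2 * sinh ((x - y) / 2) ^ 2) := by
  rw [show -2 * x = -(x / 2 + x / 2 + x / 2 + x / 2) by ring,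
    show -2 * y = -(y / 2 + y / 2 + y / 2 + y / 2) by ring,
    show -(x + y) = -(x / 2 + x / 2 + y / 2 + y / 2) by ring,
    show (x + y) / 2 = x / 2 + y / 2 by ring, show (x - y) / 2 = x / 2 - y / 2 by ring]
  simp only [sinh_eq, exp_neg, exp_add, exp_sub, neg_add, neg_sub]
  field_simp
  ring

theorem four_mul_mul_one_sub_exp_sq_lt {x y : ℝ} (hx : 0 < x) (hy : 0 < y) (hxy : x ≠ y) :
    4 * x * y * (1 - exp (-(x + y))) ^ 2
      < (x + y) ^ 2 * ((1 - exp (-2 * x)) * (1 - exp (-2 * y))) := by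
  have hsinh := sq_mul_sinh_sq_lt (d := (x - y) / 2) (m := (x + y) / 2)
    (div_ne_zero (sub_ne_zero.2 hxy) two_ne_zero) (abs_lt.2 ⟨by linarith, by linarith⟩)
  rw [← sub_pos, add_sq_mul_one_sub_exp_sub_four_mul_eq]
  exact mul_pos (by positivity) (sub_pos.2 hsinh)

noncomputable def hullWhiteCorrFactor (κi κj t : ℝ) : ℝ :=
  2 * (√(κi * κj) / (κi + κj)) * (1 - exp (-(κi + κj) * t))
    / √((1 - exp (-2 * κi * t)) * (1 - exp (-2 * κj * t)))

section
variable {κi κj t : ℝ}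

theorem hullWhiteCorrFactor_nonneg (hκi : 0 ≤ κi) (hκj : 0 ≤ κj) (ht : 0 ≤ t) :
    0 ≤ hullWhiteCorrFactor κi κj t := by
  unfold hullWhiteCorrFactor
  have : 0 ≤ 1 - exp (-(κi + κj) * t) := sub_nonneg.2 (exp_le_one_iff.2 (by nlinarith))
  positivity

theorem hullWhiteCorrFactor_self (hκ : 0 < κi) (ht : 0 < t) :
    hullWhiteCorrFactor κi κi t = 1 := by
  have hA : 0 < 1 - exp (-2 * κi * t) := sub_pos.2 (exp_lt_one_iff.2 (by nlinarith))
  unfold hullWhiteCorrFactor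
  rw [sqrt_mul_self hκ.le, sqrt_mul_self hA.le, show -(κi + κi) * t = -2 * κi * t by ring]
  generalize 1 - exp (-2 * κi * t) = A at hA ⊢
  field_simp
  ring

theorem hullWhiteCorrFactor_sq (hκi : 0 < κi) (hκj : 0 < κj) (ht : 0 < t) :
    hullWhiteCorrFactor κi κj t ^ 2
      = 4 * (κi * t) * (κj * t) * (1 - exp (-(κi * t + κj * t))) ^ 2
        / ((κi * t + κj * t) ^ 2 * ((1 - exp (-2 * (κi * t))) * (1 - exp (-2 * (κj * t))))) := by
  have hA : 0 < 1 - exp (-2 * κi * t) := sub_pos.2 (exp_lt_one_iff.2 (by nlinarith))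
  have hB : 0 < 1 - exp (-2 * κj * t) := sub_pos.2 (exp_lt_one_iff.2 (by nlinarith))
  unfold hullWhiteCorrFactor
  rw [div_pow, mul_pow, mul_pow, div_pow, sq_sqrt (by positivity), sq_sqrt (by positivity),
    show -(κi * t + κj * t) = -(κi + κj) * t by ring, show -2 * (κi * t) = -2 * κi * t by ring,
    show -2 * (κj * t) = -2 * κj * t by ring]
  field_simp
  ring

theorem hullWhiteCorrFactor_lt_one (hκi : 0 < κi) (hκj : 0 < κj) (ht : 0 < t) (hne : κi ≠ κj) :
    hullWhiteCorrFactor κi κj t < 1 := by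
  have key := four_mul_mul_one_sub_exp_sq_lt (mul_pos hκi ht) (mul_pos hκj ht)
    (fun h => hne (mul_right_cancel₀ ht.ne' h))
  rw [← pow_lt_one_iff_of_nonneg (hullWhiteCorrFactor_nonneg hκi.le hκj.le ht.le) two_ne_zero,
    hullWhiteCorrFactor_sq hκi hκj ht, div_lt_one ((by positivity : (0 : ℝ) ≤ _).trans_lt key)]
  exact key

theorem hullWhiteCorrFactor_le_one (hκi : 0 < κi) (hκj : 0 < κj) (ht : 0 < t) :
    hullWhiteCorrFactor κi κj t ≤ 1 := by
  rcases eq_or_ne κi κj with rfl | hne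
  · exact (hullWhiteCorrFactor_self hκi ht).le
  · exact (hullWhiteCorrFactor_lt_one hκi hκj ht hne).le

theorem hullWhiteCorrFactor_eq_one_iff (hκi : 0 < κi) (hκj : 0 < κj) (ht : 0 < t) :
    hullWhiteCorrFactor κi κj t = 1 ↔ κi = κj := by
  refine ⟨fun h => ?_, fun h => h ▸ hullWhiteCorrFactor_self hκi ht⟩
  by_contra hne
  exact (hullWhiteCorrFactor_lt_one hκi hκj ht hne).ne h

end

theorem stmt_17_general (κi κj ρ t : ℝ) (hκi : 0 < κi) (hκj : 0 < κj)
    (hρ0 : 0 < ρ) (ht : 0 < t) :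
    2 * ρ * (Real.sqrt (κi * κj) / (κi + κj)) * (1 - Real.exp (-(κi + κj) * t))
        / Real.sqrt ((1 - Real.exp (-2 * κi * t)) * (1 - Real.exp (-2 * κj * t)))
      ≤ ρ
    ∧ (2 * ρ * (Real.sqrt (κi * κj) / (κi + κj)) * (1 - Real.exp (-(κi + κj) * t))
          / Real.sqrt ((1 - Real.exp (-2 * κi * t)) * (1 - Real.exp (-2 * κj * t)))
        = ρ ↔ κi = κj) := by
  have hfactor : 2 * ρ * (√(κi * κj) / (κi + κj)) * (1 - exp (-(κi + κj) * t))
      / √((1 - exp (-2 * κi * t)) * (1 - exp (-2 * κj * t)))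
      = ρ * hullWhiteCorrFactor κi κj t := by
    unfold hullWhiteCorrFactor; ring
  rw [hfactor, mul_le_iff_le_one_right hρ0, mul_eq_left₀ hρ0.ne']
  exact ⟨hullWhiteCorrFactor_le_one hκi hκj ht, hullWhiteCorrFactor_eq_one_iff hκi hκj ht⟩

/-- The Hull–White correlation function
`2 ρ (√(κi κj)/(κi + κj)) (1 - e^{-(κi+κj) t}) / √((1 - e^{-2 κi t})(1 - e^{-2 κj t}))`
is bounded above by `ρ`, with equality if and only if `κi = κj` (for `t > 0`, `ρ ∈ (0,1)`). -/
theorem stmt_17 (κi κj ρ t : ℝ) (hκi : 0 < κi) (hκj : 0 < κj)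
    (hρ0 : 0 < ρ) (hρ1 : ρ < 1) (ht : 0 < t) :
    2 * ρ * (Real.sqrt (κi * κj) / (κi + κj)) * (1 - Real.exp (-(κi + κj) * t))
        / Real.sqrt ((1 - Real.exp (-2 * κi * t)) * (1 - Real.exp (-2 * κj * t)))
      ≤ ρ
    ∧ (2 * ρ * (Real.sqrt (κi * κj) / (κi + κj)) * (1 - Real.exp (-(κi + κj) * t))
          / Real.sqrt ((1 - Real.exp (-2 * κi * t)) * (1 - Real.exp (-2 * κj * t)))
        = ρ ↔ κi = κj) :=
  stmt_17_general κi κj ρ t hκi hκj hρ0 ht
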